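/- arXiv:1507.05235 — 4 statements merged into one kernel-verified Lean document; each statement's English description precedes it below -/
import Mathlib

section
/- For every f : ℝ → ℝ, every n and every k with 0 ≤ k ≤ n, the k-th derivative of the n-th Bernstein polynomial satisfies B_n^{(k)}(f;x) = (n!/(n−k)!) · ∑_{j=0}^{n−k} Δ_{1/n}^k f(j/n) · C(n−k,j) · x^j (1−x)^{n−k−j}, where Δ_{1/n}^k denotes the k-fold iterate of the forward difference operator with step 1/n. -/
/-!
In Mathlib's Bernstein basis `b_{n,j}`, `B_n f = ∑ f(j/n) b_{n,j}`. The identity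
`b'_{m+1,ν+1} = (m+1)(b_{m,ν} - b_{m,ν+1})` and a summation by parts show that differentiating a
Bernstein combination `∑ a_j b_{m+1,j}` gives `(m+1) ∑ (a_{j+1} - a_j) b_{m,j}`. Iterating `k` times
produces the falling factorial `n(n-1)⋯(n-k+1) = n!/(n-k)!` and the `k`-th unit-step difference of
`j ↦ f(j/n)`, which is `Δ_{1/n}^k f (j/n)` because `j ↦ j/n` turns unit steps into steps of `1/n`.
-/

/-- The `n`-th Bernstein polynomial of `f`:
`B_n(f;x) = ∑_{j=0}^{n} f(j/n) C(n,j) x^j (1-x)^{n-j}`. -/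
noncomputable def bernsteinPoly (n : ℕ) (f : ℝ → ℝ) (x : ℝ) : ℝ :=
  ∑ j ∈ Finset.range (n + 1),
    f ((j : ℝ) / n) * (n.choose j : ℝ) * x ^ j * (1 - x) ^ (n - j)

/-- The forward difference operator with step `z`: `Δ_z f(y) = f(y+z) - f(y)`. -/
def fwdDiffOp (z : ℝ) (f : ℝ → ℝ) : ℝ → ℝ := fun y => f (y + z) - f y

open Polynomial Finset

theorem fwdDiffOp_eq_fwdDiff (z : ℝ) : fwdDiffOp z = fwdDiff z := rfl

theorem fwdDiff_iterate_comp {M N G : Type*} [AddCommMonoid M] [AddCommMonoid N] [AddCommGroup G]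
    {h : M} {h' : N} {φ : M → N} (hφ : ∀ y, φ (y + h) = φ y + h') (k : ℕ) (f : N → G) :
    (fwdDiff h)^[k] (f ∘ φ) = (fwdDiff h')^[k] f ∘ φ := by
  have hsemiconj : Function.Semiconj (fun g : N → G ↦ g ∘ φ) (fwdDiff h') (fwdDiff h) := fun g ↦ by
    funext y
    simp [fwdDiff, hφ]
  exact (hsemiconj.iterate_right k f).symm

theorem iteratedDeriv_polynomial_eval {𝕜 : Type*} [NontriviallyNormedField 𝕜] (p : 𝕜[X]) (k : ℕ) :
    iteratedDeriv k (fun x ↦ p.eval x) = fun x ↦ (derivative^[k] p).eval x := by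
  induction k generalizing p with
  | zero => rfl
  | succ k ih =>
    rw [iteratedDeriv_succ', funext fun x ↦ p.deriv (x := x), ih, Function.iterate_succ_apply]

section BernsteinSum

variable (R : Type*) [CommRing R]

noncomputable def bernsteinSum (n : ℕ) (a : ℕ → R) : R[X] :=
  ∑ j ∈ range (n + 1), C (a j) * bernsteinPolynomial R n j

variable {R}

theorem eval_bernsteinSum (n : ℕ) (a : ℕ → R) (x : R) :
    (bernsteinSum R n a).eval x =
      ∑ j ∈ range (n + 1), a j * (n.choose j : R) * x ^ j * (1 - x) ^ (n - j) := by
  simp [bernsteinSum, bernsteinPolynomial, eval_finsetSum, mul_assoc]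

theorem derivative_bernsteinSum_succ (m : ℕ) (a : ℕ → R) :
    derivative (bernsteinSum R (m + 1) a) =
      ((m + 1 : ℕ) : R[X]) * bernsteinSum R m (fwdDiff 1 a) := by
  have shift : ∑ j ∈ range (m + 1), C (a (j + 1)) * bernsteinPolynomial R m (j + 1) =
      ∑ j ∈ range (m + 1), C (a j) * bernsteinPolynomial R m j -
        C (a 0) * bernsteinPolynomial R m 0 := by
    rw [eq_sub_iff_add_eq, ← sum_range_succ' (fun j ↦ C (a j) * bernsteinPolynomial R m j),
      sum_range_succ, bernsteinPolynomial.eq_zero_of_lt R (Nat.lt_succ_self m), mul_zero, add_zero]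
  simp only [bernsteinSum, derivative_sum, derivative_C_mul]
  rw [sum_range_succ', bernsteinPolynomial.derivative_zero]
  simp only [bernsteinPolynomial.derivative_succ_aux, Nat.add_sub_cancel, fwdDiff, C_sub, sub_mul,
    sum_sub_distrib, mul_sub, mul_left_comm (C _), ← mul_sum]
  push_cast
  linear_combination (-(m + 1) : R[X]) * shift

theorem iterate_derivative_bernsteinSum (m k : ℕ) (a : ℕ → R) :
    derivative^[k] (bernsteinSum R (m + k) a) =
      ((m + k).descFactorial k : R[X]) * bernsteinSum R m ((fwdDiff 1)^[k] a) := by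
  induction k generalizing a with
  | zero => simp
  | succ k ih =>
    rw [Function.iterate_succ_apply, ← add_assoc, derivative_bernsteinSum_succ,
      iterate_derivative_natCast_mul, ih, Function.iterate_succ_apply, Nat.succ_descFactorial_succ,
      Nat.cast_mul, mul_assoc]

end BernsteinSum

/-- For every `f : ℝ → ℝ` and `0 ≤ k ≤ n`,
`B_n^{(k)}(f;x) = (n!/(n-k)!) ∑_{j=0}^{n-k} Δ_{1/n}^k f(j/n) C(n-k,j) x^j (1-x)^{n-k-j}`,
where `Δ_{1/n}^k` is the `k`-fold iterate of the forward difference operator with step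
`1/n`. -/
theorem bernstein_iteratedDeriv_eq (f : ℝ → ℝ) (n k : ℕ) (hk : k ≤ n) (x : ℝ) :
    iteratedDeriv k (bernsteinPoly n f) x =
      (n.factorial : ℝ) / ((n - k).factorial : ℝ) *
        ∑ j ∈ Finset.range (n - k + 1),
          (fwdDiffOp (1 / n))^[k] f ((j : ℝ) / n) * ((n - k).choose j : ℝ) *
            x ^ j * (1 - x) ^ (n - k - j) := by
  obtain ⟨m, rfl⟩ := Nat.exists_eq_add_of_le' hk
  rw [fwdDiffOp_eq_fwdDiff]
  have hB : bernsteinPoly (m + k) f =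
      fun x ↦ (bernsteinSum ℝ (m + k) fun j ↦ f (j / (m + k : ℕ))).eval x :=
    funext fun x ↦ (eval_bernsteinSum _ _ x).symm
  have hΔ : (fwdDiff 1)^[k] (fun j : ℕ ↦ f (j / (m + k : ℕ))) =
      (fwdDiff (1 / (m + k : ℕ) : ℝ))^[k] f ∘ fun j : ℕ ↦ (j : ℝ) / (m + k : ℕ) :=
    fwdDiff_iterate_comp (fun j ↦ by push_cast; ring) k f
  have hfac : ((m + k).factorial : ℝ) / (m + k - k).factorial = (m + k).descFactorial k := by
    rw [← Nat.factorial_mul_descFactorial hk, Nat.cast_mul]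
    field_simp
  rw [hB, iteratedDeriv_polynomial_eval, iterate_derivative_bernsteinSum]
  beta_reduce
  rw [eval_mul, eval_natCast, eval_bernsteinSum, hΔ, hfac, Nat.add_sub_cancel]
  rfl
end

section
/- Let d ≥ 1 and let f : ℝ^d → ℝ be continuous. Then the cube Bernstein polynomials B̃_n(f;x) converge to f(x) as n → ∞, uniformly on the cube K^d = [0,1]^d. -/
/-!
`B̃_n(f;x)` is the expectation of `f(Y/n)` for independent coordinates `Y i ~ Bin(n, x i)`:
the weights are nonnegative, sum to `1`, and the second moment of `Y/n - x` is
`∑ i, x i (1 - x i) / n ≤ d / (4n)`. Since `f` is bounded and uniformly continuous on the cube,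
for every `ε > 0` there is `C` (namely `2 sup |f| / δ²`, with `δ` a modulus of uniform continuity
for `ε`) such that `|f y - f x| ≤ ε + C ‖y - x‖²` on the cube; averaging this
against the weights gives `|B̃_n(f;x) - f x| ≤ ε + C d / (4n)` uniformly in `x`.
-/

/-- The `n`-th "cube" Bernstein polynomial of `f : ℝ^d → ℝ`:
`B̃_n(f;x) = ∑_{j_1,…,j_d=0}^{n} f(j_1/n,…,j_d/n) ∏_i C(n,j_i) x_i^{j_i} (1-x_i)^{n-j_i}`. -/
noncomputable def cubeBernstein (d n : ℕ) (f : (Fin d → ℝ) → ℝ) (x : Fin d → ℝ) : ℝ :=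
  ∑ j ∈ Fintype.piFinset (fun _ : Fin d => Finset.range (n + 1)),
    f (fun i => (j i : ℝ) / n) *
      ∏ i, (n.choose (j i) : ℝ) * x i ^ (j i) * (1 - x i) ^ (n - j i)

open Finset Filter Topology

lemma sum_choose_mul_pow_mul_one_sub_pow (n : ℕ) (x : ℝ) :
    ∑ j ∈ range (n + 1), (n.choose j : ℝ) * x ^ j * (1 - x) ^ (n - j) = 1 := by
  simpa [bernsteinPolynomial, map_sum] using
    congrArg (Polynomial.aeval x) (bernsteinPolynomial.sum ℝ n)

lemma sum_div_sub_sq_mul_choose_mul_pow_mul_one_sub_pow {n : ℕ} (hn : n ≠ 0) (x : ℝ) :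
    ∑ j ∈ range (n + 1), ((j : ℝ) / n - x) ^ 2 * ((n.choose j : ℝ) * x ^ j * (1 - x) ^ (n - j))
      = x * (1 - x) / n := by
  have hvar : ∑ j ∈ range (n + 1),
      ((n : ℝ) * x - j) ^ 2 * ((n.choose j : ℝ) * x ^ j * (1 - x) ^ (n - j)) = n * x * (1 - x) := by
    simpa [bernsteinPolynomial, map_sum, nsmul_eq_mul] using
      congrArg (Polynomial.aeval x) (bernsteinPolynomial.variance (R := ℝ) n)
  have hn' : (n : ℝ) ≠ 0 := Nat.cast_ne_zero.mpr hn
  calc _ = (∑ j ∈ range (n + 1),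
          ((n : ℝ) * x - j) ^ 2 * ((n.choose j : ℝ) * x ^ j * (1 - x) ^ (n - j))) / (n : ℝ) ^ 2 := by
        rw [sum_div]
        refine sum_congr rfl fun j _ => ?_
        field_simp
        ring
    _ = x * (1 - x) / n := by rw [hvar]; field_simp

lemma exists_abs_sub_le_add_mul_dist_sq {α : Type*} [PseudoMetricSpace α] {s : Set α}
    (hs : IsCompact s) {f : α → ℝ} (hf : ContinuousOn f s) {ε : ℝ} (hε : 0 < ε) :
    ∃ C, 0 ≤ C ∧ ∀ x ∈ s, ∀ y ∈ s, |f y - f x| ≤ ε + C * dist y x ^ 2 := by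
  obtain ⟨M, hM⟩ := hs.exists_bound_of_continuousOn hf
  simp only [Real.norm_eq_abs] at hM
  obtain ⟨δ, hδ, hfδ⟩ :=
    Metric.uniformContinuousOn_iff.1 (hs.uniformContinuousOn_of_continuous hf) ε hε
  refine ⟨2 * max M 0 / δ ^ 2, by positivity, fun x hx y hy => ?_⟩
  rcases lt_or_ge (dist y x) δ with hnear | hfar
  · have hclose := hfδ y hy x hx hnear
    rw [Real.dist_eq] at hclose
    have hpos : 0 ≤ 2 * max M 0 / δ ^ 2 * dist y x ^ 2 := by positivity
    linarith
  · calc |f y - f x| ≤ |f y| + |f x| := abs_sub _ _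
      _ ≤ 2 * max M 0 := by
        linarith [(hM y hy).trans (le_max_left M 0), (hM x hx).trans (le_max_left M 0)]
      _ = 2 * max M 0 / δ ^ 2 * δ ^ 2 := by field_simp
      _ ≤ 2 * max M 0 / δ ^ 2 * dist y x ^ 2 := by gcongr
      _ ≤ ε + 2 * max M 0 / δ ^ 2 * dist y x ^ 2 := le_add_of_nonneg_left hε.le

section

variable {ι : Type*} [Fintype ι]

lemma dist_sq_le_sum_sub_sq (x y : ι → ℝ) : dist x y ^ 2 ≤ ∑ i, (x i - y i) ^ 2 := by
  refine (Real.le_sqrt dist_nonneg (sum_nonneg fun i _ => sq_nonneg _)).1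
    ((dist_pi_le_iff (Real.sqrt_nonneg _)).2 fun i => ?_)
  rw [Real.dist_eq]
  exact Real.abs_le_sqrt (single_le_sum (fun i _ => sq_nonneg (x i - y i)) (Finset.mem_univ i))

def cubeBernsteinWeight (n : ℕ) (x : ι → ℝ) (j : ι → ℕ) : ℝ :=
  ∏ i, (n.choose (j i) : ℝ) * x i ^ (j i) * (1 - x i) ^ (n - j i)

lemma cubeBernsteinWeight_nonneg (n : ℕ) {x : ι → ℝ} (hx : x ∈ Set.Icc 0 1) (j : ι → ℕ) :
    0 ≤ cubeBernsteinWeight n x j :=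
  prod_nonneg fun i _ => mul_nonneg (mul_nonneg (Nat.cast_nonneg _) (pow_nonneg (hx.1 i) _))
    (pow_nonneg (sub_nonneg.mpr (hx.2 i)) _)

variable [DecidableEq ι]

lemma natCast_div_mem_Icc_of_mem_piFinset {n : ℕ} {j : ι → ℕ}
    (hj : j ∈ Fintype.piFinset (fun _ : ι => range (n + 1))) :
    (fun i => (j i : ℝ) / n) ∈ Set.Icc 0 1 := by
  refine ⟨fun i => by positivity, fun i => div_le_one_of_le₀ ?_ n.cast_nonneg⟩
  exact Nat.cast_le.2 <| Nat.lt_succ_iff.1 (mem_range.1 (Fintype.mem_piFinset.1 hj i))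

lemma sum_cubeBernsteinWeight (n : ℕ) (x : ι → ℝ) :
    ∑ j ∈ Fintype.piFinset (fun _ : ι => range (n + 1)), cubeBernsteinWeight n x j = 1 := by
  unfold cubeBernsteinWeight
  rw [← prod_univ_sum (fun _ => range (n + 1))
    (fun i m => (n.choose m : ℝ) * x i ^ m * (1 - x i) ^ (n - m))]
  simp [sum_choose_mul_pow_mul_one_sub_pow]

lemma sum_sub_sq_mul_cubeBernsteinWeight {n : ℕ} (hn : n ≠ 0) (x : ι → ℝ) (k : ι) :
    ∑ j ∈ Fintype.piFinset (fun _ : ι => range (n + 1)),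
      ((j k : ℝ) / n - x k) ^ 2 * cubeBernsteinWeight n x j = x k * (1 - x k) / n := by
  -- The weight `(j k / n - x k) ^ 2` only involves coordinate `k`, so the sum factors.
  have hprod : ∀ j : ι → ℕ, ((j k : ℝ) / n - x k) ^ 2 * cubeBernsteinWeight n x j
      = ∏ i, (if i = k then ((j i : ℝ) / n - x i) ^ 2 else 1) *
          ((n.choose (j i) : ℝ) * x i ^ (j i) * (1 - x i) ^ (n - j i)) := by
    intro j
    rw [prod_mul_distrib, prod_ite_eq' univ k, if_pos (Finset.mem_univ k), cubeBernsteinWeight]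
  rw [sum_congr rfl fun j _ => hprod j, ← prod_univ_sum (fun _ => range (n + 1))
    (fun i m => (if i = k then ((m : ℝ) / n - x i) ^ 2 else 1) *
      ((n.choose m : ℝ) * x i ^ m * (1 - x i) ^ (n - m))), prod_eq_single k]
  · simpa using sum_div_sub_sq_mul_choose_mul_pow_mul_one_sub_pow hn (x k)
  · intro i _ hik
    simpa [hik] using sum_choose_mul_pow_mul_one_sub_pow n (x i)
  · simp

lemma sum_sum_sub_sq_mul_cubeBernsteinWeight_le {n : ℕ} (hn : n ≠ 0) (x : ι → ℝ) :
    ∑ j ∈ Fintype.piFinset (fun _ : ι => range (n + 1)),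
      (∑ i, ((j i : ℝ) / n - x i) ^ 2) * cubeBernsteinWeight n x j
      ≤ Fintype.card ι / (4 * n) := by
  calc _ = ∑ i, x i * (1 - x i) / n := by
        simp_rw [sum_mul]
        rw [sum_comm]
        exact sum_congr rfl fun i _ => sum_sub_sq_mul_cubeBernsteinWeight hn x i
    _ ≤ ∑ _i : ι, 1 / 4 / (n : ℝ) := sum_le_sum fun i _ => by
        gcongr
        nlinarith [sq_nonneg (2 * x i - 1)]
    _ = Fintype.card ι / (4 * n) := by
        rw [sum_const, card_univ, nsmul_eq_mul]
        ring

lemma abs_cubeBernstein_sub_le {d n : ℕ} (hn : n ≠ 0) {f : (Fin d → ℝ) → ℝ} {x : Fin d → ℝ}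
    (hx : x ∈ Set.Icc 0 1) {ε C : ℝ} (hC : 0 ≤ C)
    (hf : ∀ y ∈ Set.Icc 0 1, |f y - f x| ≤ ε + C * dist y x ^ 2) :
    |cubeBernstein d n f x - f x| ≤ ε + C * (d / (4 * n)) := by
  set J := Fintype.piFinset (fun _ : Fin d => range (n + 1))
  have hw := cubeBernsteinWeight_nonneg n hx
  have hw1 : ∑ j ∈ J, cubeBernsteinWeight n x j = 1 := sum_cubeBernsteinWeight n x
  have hsub : cubeBernstein d n f x - f x
      = ∑ j ∈ J, (f (fun i => (j i : ℝ) / n) - f x) * cubeBernsteinWeight n x j := by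
    simp only [sub_mul, sum_sub_distrib, ← mul_sum, hw1, mul_one]
    rfl
  calc |cubeBernstein d n f x - f x|
      ≤ ∑ j ∈ J, |f (fun i => (j i : ℝ) / n) - f x| * cubeBernsteinWeight n x j := by
        rw [hsub]
        refine (abs_sum_le_sum_abs _ _).trans_eq (sum_congr rfl fun j _ => ?_)
        rw [abs_mul, abs_of_nonneg (hw j)]
    _ ≤ ∑ j ∈ J, (ε + C * ∑ i, ((j i : ℝ) / n - x i) ^ 2) * cubeBernsteinWeight n x j := by
        refine sum_le_sum fun j hj => mul_le_mul_of_nonneg_right ?_ (hw j)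
        refine (hf _ (natCast_div_mem_Icc_of_mem_piFinset hj)).trans ?_
        gcongr
        exact dist_sq_le_sum_sub_sq _ _
    _ = ε + C * ∑ j ∈ J, (∑ i, ((j i : ℝ) / n - x i) ^ 2) * cubeBernsteinWeight n x j := by
        simp_rw [add_mul, sum_add_distrib, ← mul_sum, hw1, mul_one, mul_assoc, ← mul_sum]
    _ ≤ ε + C * (d / (4 * n)) := by
        gcongr
        simpa using sum_sum_sub_sq_mul_cubeBernsteinWeight_le hn x

end

theorem cubeBernstein_tendstoUniformlyOn_general (d : ℕ)
    (f : (Fin d → ℝ) → ℝ) (hf : Continuous f) :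
    TendstoUniformlyOn (fun n x => cubeBernstein d n f x) f Filter.atTop
      (Set.Icc (0 : Fin d → ℝ) 1) := by
  rw [Metric.tendstoUniformlyOn_iff]
  intro ε hε
  obtain ⟨C, hC, hfC⟩ :=
    exists_abs_sub_le_add_mul_dist_sq isCompact_Icc hf.continuousOn (half_pos hε)
  have hlim : Tendsto (fun n : ℕ => C * (d / (4 * n))) atTop (𝓝 0) := by
    simpa only [div_div, mul_zero] using
      (tendsto_const_div_atTop_nhds_zero_nat (d / 4 : ℝ)).const_mul C
  filter_upwards [hlim.eventually (gt_mem_nhds (half_pos hε)), eventually_ne_atTop 0]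
    with n hsmall hn x hx
  rw [dist_comm, Real.dist_eq]
  linarith [abs_cubeBernstein_sub_le hn hx hC (hfC x hx)]

/-- If `d ≥ 1` and `f : ℝ^d → ℝ` is continuous, then the cube Bernstein polynomials
`B̃_n(f;·)` converge to `f` uniformly on the cube `K^d = [0,1]^d`. -/
theorem cubeBernstein_tendstoUniformlyOn (d : ℕ) (hd : 1 ≤ d)
    (f : (Fin d → ℝ) → ℝ) (hf : Continuous f) :
    TendstoUniformlyOn (fun n x => cubeBernstein d n f x) f Filter.atTop
      (Set.Icc (0 : Fin d → ℝ) 1) :=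
  cubeBernstein_tendstoUniformlyOn_general d f hf
end

section
/- Let d ≥ 1, let k = (k_1,…,k_d) be a multi-index, and let f : ℝ^d → ℝ possess a continuous mixed partial derivative ∂^{|k|}f/∂x_1^{k_1}⋯∂x_d^{k_d}. Then the mixed partial derivatives ∂^{|k|}B̃_n(f;x)/∂x_1^{k_1}⋯∂x_d^{k_d} of the cube Bernstein polynomials converge to ∂^{|k|}f(x)/∂x_1^{k_1}⋯∂x_d^{k_d} as n → ∞, uniformly on the cube K^d = [0,1]^d. -/
/-- Partial derivative of `g : ℝ^d → ℝ` in the `i`-th coordinate. -/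
noncomputable def partialDeriv' {d : ℕ} (i : Fin d) (g : (Fin d → ℝ) → ℝ) :
    (Fin d → ℝ) → ℝ :=
  fun x => deriv (fun t => g (Function.update x i t)) (x i)

/-- Mixed partial derivative `∂^{|k|}/∂x_1^{k_1}⋯∂x_d^{k_d}` of `g : ℝ^d → ℝ`
(the derivative in `x_1` is applied outermost). -/
noncomputable def mixedPartial {d : ℕ} (k : Fin d → ℕ) (g : (Fin d → ℝ) → ℝ) :
    (Fin d → ℝ) → ℝ :=
  (List.finRange d).foldr (fun i h => (partialDeriv' i)^[k i] h) g

/-- `IsPartialAlong l f g` says that `g` is the iterated partial derivative of `f` taken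
successively in the coordinates listed in `l` (head of the list is the outermost
differentiation), each single differentiation existing everywhere. -/
def IsPartialAlong {d : ℕ} : List (Fin d) → ((Fin d → ℝ) → ℝ) → ((Fin d → ℝ) → ℝ) → Prop
  | [], f, g => g = f
  | i :: l, f, g => ∃ h : (Fin d → ℝ) → ℝ, IsPartialAlong l f h ∧
      ∀ x, HasDerivAt (fun t => h (Function.update x i t)) (g x) (x i)

/-- The list of coordinates `1^{k_1}, 2^{k_2}, …, d^{k_d}` encoding the multi-index `k`. -/
def multiIndexList {d : ℕ} (k : Fin d → ℕ) : List (Fin d) :=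
  (List.finRange d).flatMap fun i => List.replicate (k i) i

/-!
Write `B̃_n f` as a tensor Bernstein sum `∑_j c_j ∏_i b_{n,j_i}(x_i)` with `c_j = f(j/n)`.
Differentiating in `x_i` lowers the `i`-th degree by one and replaces `c` by `n` times its forward
difference in `j_i`, so `∂^k B̃_n f = (∏_i n(n-1)⋯(n-k_i+1)) ∑_j Δ^k c_j ∏_i b_{n-k_i,j_i}(x_i)`.
Forward differences commute with partial derivatives, so applying the mean value theorem once per
derivative gives `Δ^k c_j = n^{-|k|} g(ξ_j)` for a node `ξ_j` in the box `[j/n, (j+k)/n]`. Hence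
`∂^k B̃_n f` is, up to a factor tending to `1`, a Bernstein average of `g` at nodes within `k/n` of
`j/(n-k)`, and the classical Chebyshev argument (uniform continuity plus the variance
`x(1-x)/m` of the Bernstein weights) gives uniform convergence to `g`.
-/

open Finset Function Polynomial fwdDiff Filter Topology

theorem Finset.sum_piFinset_eq_sum_sum_update {ι κ M : Type*} [Fintype ι] [DecidableEq ι]
    [DecidableEq κ] [AddCommMonoid M] (s : ι → Finset κ) (i : ι) (b : κ) (F : (ι → κ) → M) :
    ∑ j ∈ Fintype.piFinset s, F j =
      ∑ a ∈ s i, ∑ j ∈ Fintype.piFinset (update s i {b}), F (update j i a) := by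
  rw [← sum_product']
  refine sum_nbij' (fun j => (j i, update j i b)) (fun p => update p.2 i p.1) ?_ ?_ ?_ ?_ ?_
  · intro j hj
    simp only [mem_product, Fintype.mem_piFinset] at hj ⊢
    refine ⟨hj i, fun l => ?_⟩
    rcases eq_or_ne l i with rfl | h <;> simp [*]
  · intro p hp
    simp only [mem_product, Fintype.mem_piFinset] at hp ⊢
    intro l
    rcases eq_or_ne l i with rfl | h
    · simpa using hp.1
    · simpa [h] using hp.2 l
  · intro j _
    simp
  · intro p hp
    simp only [mem_product, Fintype.mem_piFinset] at hp
    have := hp.2 i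
    rw [update_self, mem_singleton] at this
    simp [← this]
  · intro j _
    simp

theorem Function.update_add_single {ι M : Type*} [DecidableEq ι] [AddZeroClass M] (j : ι → M)
    (i : ι) (a s : M) : update j i a + Pi.single i s = update j i (a + s) := by
  ext l
  rcases eq_or_ne l i with rfl | h <;> simp [*]

theorem List.foldr_replicate_eq_iterate {α β : Type*} (f : α → β → β) (a : α) (n : ℕ) (b : β) :
    (List.replicate n a).foldr f b = (f a)^[n] b := by
  induction n with
  | zero => rfl
  | succ n ih => rw [List.replicate_succ, List.foldr_cons, ih, iterate_succ_apply']

namespace bernsteinPolynomial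

theorem derivative_sum_C_mul {R : Type*} [CommRing R] (m : ℕ) (c : ℕ → R) :
    derivative (∑ a ∈ range (m + 2), C (c a) * bernsteinPolynomial R (m + 1) a) =
      (m + 1) * ∑ a ∈ range (m + 1), C (c (a + 1) - c a) * bernsteinPolynomial R m a := by
  have hshift : ∑ a ∈ range (m + 1), C (c (a + 1)) * bernsteinPolynomial R m (a + 1) =
      ∑ a ∈ range (m + 1), C (c a) * bernsteinPolynomial R m a -
        C (c 0) * bernsteinPolynomial R m 0 := by
    rw [eq_sub_iff_add_eq, ← sum_range_succ' (fun a => C (c a) * bernsteinPolynomial R m a),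
      sum_range_succ, bernsteinPolynomial.eq_zero_of_lt R (Nat.lt_succ_self m), mul_zero, add_zero]
  simp only [derivative_sum, derivative_C_mul]
  rw [sum_range_succ', bernsteinPolynomial.derivative_zero]
  simp only [bernsteinPolynomial.derivative_succ_aux, mul_sub, mul_left_comm (C _) ((m : R[X]) + 1),
    ← mul_sum, sum_sub_distrib, hshift, C_sub, sub_mul, Nat.add_sub_cancel, Nat.cast_add,
    Nat.cast_one]
  ring

theorem hasDerivAt_sum_mul_eval (m : ℕ) (c : ℕ → ℝ) (t : ℝ) :
    HasDerivAt (fun t => ∑ a ∈ range (m + 2), c a * (bernsteinPolynomial ℝ (m + 1) a).eval t)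
      ((m + 1) * ∑ a ∈ range (m + 1), (c (a + 1) - c a) * (bernsteinPolynomial ℝ m a).eval t)
      t := by
  have := (∑ a ∈ range (m + 2), C (c a) * bernsteinPolynomial ℝ (m + 1) a).hasDerivAt t
  rw [derivative_sum_C_mul] at this
  simpa [eval_finsetSum] using this

theorem eval_nonneg (m a : ℕ) {t : ℝ} (h0 : 0 ≤ t) (h1 : t ≤ 1) :
    0 ≤ (bernsteinPolynomial ℝ m a).eval t := by
  have := sub_nonneg.2 h1
  simp only [bernsteinPolynomial, eval_mul, eval_pow, eval_natCast, eval_X, eval_sub, eval_one]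
  positivity

theorem sum_eval (m : ℕ) (t : ℝ) : ∑ a ∈ range (m + 1), (bernsteinPolynomial ℝ m a).eval t = 1 := by
  simpa [eval_finsetSum] using congrArg (Polynomial.eval t) (bernsteinPolynomial.sum ℝ m)

theorem sum_sq_sub_mul_eval {m : ℕ} (hm : 0 < m) (t : ℝ) :
    ∑ a ∈ range (m + 1), ((a : ℝ) / m - t) ^ 2 * (bernsteinPolynomial ℝ m a).eval t =
      t * (1 - t) / m := by
  have h := congrArg (Polynomial.eval t) (bernsteinPolynomial.variance ℝ m)
  simp only [eval_finsetSum, eval_mul, eval_pow, eval_sub, eval_natCast, eval_X,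
    eval_one, nsmul_eq_mul] at h
  have hm' : (m : ℝ) ≠ 0 := by positivity
  have hsq : ∀ a : ℕ, ((a : ℝ) / m - t) ^ 2 = (m * t - a) ^ 2 / m ^ 2 := fun a => by
    field_simp; ring
  simp only [hsq, div_mul_eq_mul_div, ← sum_div, h]
  field_simp

end bernsteinPolynomial

def fwdDiffAlong {ι M G : Type*} [AddCommMonoid M] [AddCommGroup G] (v : ι → M) (l : List ι)
    (u : M → G) : M → G :=
  l.foldr (fun i u => Δ_[v i] u) u

section FwdDiff

variable {ι M N G : Type*} [AddCommMonoid M] [AddCommMonoid N] [AddCommGroup G]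

theorem fwdDiff_comm (v w : M) (u : M → G) : Δ_[v] (Δ_[w] u) = Δ_[w] (Δ_[v] u) := by
  ext y
  simp only [fwdDiff, add_right_comm y v w]
  abel

theorem fwdDiffAlong_fwdDiff (v : ι → M) (l : List ι) (w : M) (u : M → G) :
    fwdDiffAlong v l (Δ_[w] u) = Δ_[w] (fwdDiffAlong v l u) := by
  induction l with
  | nil => rfl
  | cons i l ih => simp only [fwdDiffAlong, List.foldr_cons] at ih ⊢; rw [ih, fwdDiff_comm]

theorem fwdDiffAlong_comp (φ : M →+ N) (v : ι → M) (l : List ι) (u : N → G) :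
    fwdDiffAlong v l (u ∘ φ) = fwdDiffAlong (φ ∘ v) l u ∘ φ := by
  induction l with
  | nil => rfl
  | cons i l ih =>
    simp only [fwdDiffAlong, List.foldr_cons] at ih ⊢
    rw [ih]
    ext y
    simp [fwdDiff]

end FwdDiff

section MultiIndex

variable {d : ℕ}

theorem mixedPartial_eq_foldr (k : Fin d → ℕ) (g : (Fin d → ℝ) → ℝ) :
    mixedPartial k g = (multiIndexList k).foldr partialDeriv' g := by
  rw [mixedPartial, multiIndexList]
  induction List.finRange d with
  | nil => rfl
  | cons i L ih =>
    rw [List.foldr_cons, List.flatMap_cons, List.foldr_append, ← ih,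
      List.foldr_replicate_eq_iterate]

theorem count_multiIndexList (k : Fin d → ℕ) (i : Fin d) : (multiIndexList k).count i = k i := by
  simp [multiIndexList, List.count_flatMap, ← Fin.sum_univ_def, List.count_replicate]

theorem length_multiIndexList (k : Fin d → ℕ) : (multiIndexList k).length = ∑ i, k i := by
  simp [multiIndexList, List.length_flatMap, ← Fin.sum_univ_def]

end MultiIndex

section TensorBernstein

variable {d : ℕ}

noncomputable def tensorBernstein (m : Fin d → ℕ) (c : (Fin d → ℕ) → ℝ) (x : Fin d → ℝ) : ℝ :=
  ∑ j ∈ Fintype.piFinset (fun i => range (m i + 1)),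
    c j * ∏ i, (bernsteinPolynomial ℝ (m i) (j i)).eval (x i)

theorem tensorBernstein_update (m : Fin d → ℕ) (c : (Fin d → ℕ) → ℝ) (x : Fin d → ℝ)
    (i : Fin d) (t : ℝ) :
    tensorBernstein m c (update x i t) =
      ∑ a ∈ range (m i + 1), tensorBernstein (update m i 0) (fun j => c (update j i a)) x *
        (bernsteinPolynomial ℝ (m i) a).eval t := by
  have hbox : Fintype.piFinset (fun l => range (update m i 0 l + 1)) =
      Fintype.piFinset (update (fun l => range (m l + 1)) i {0}) := by
    congr 1; ext1 l
    rcases eq_or_ne l i with rfl | h <;> simp [*]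
  rw [tensorBernstein, sum_piFinset_eq_sum_sum_update _ i 0]
  refine sum_congr rfl fun a _ => ?_
  rw [tensorBernstein, hbox, sum_mul]
  refine sum_congr rfl fun j hj => ?_
  have hj0 : j i = 0 := by simpa using Fintype.mem_piFinset.mp hj i
  set B : Fin d → ℝ := fun l => (bernsteinPolynomial ℝ (m l) (j l)).eval (x l)
  have hleft : (fun l => (bernsteinPolynomial ℝ (m l) (update j i a l)).eval (update x i t l)) =
      update B i ((bernsteinPolynomial ℝ (m i) a).eval t) := by
    ext1 l
    rcases eq_or_ne l i with rfl | h <;> simp [B, *]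
  have hright : (fun l => (bernsteinPolynomial ℝ (update m i 0 l) (j l)).eval (x l)) =
      update B i 1 := by
    ext1 l
    rcases eq_or_ne l i with rfl | h <;> simp [B, bernsteinPolynomial, *]
  rw [hleft, hright, prod_update_of_mem (mem_univ i), prod_update_of_mem (mem_univ i)]
  ring

theorem partialDeriv'_tensorBernstein (i : Fin d) (m : Fin d → ℕ) (c : (Fin d → ℕ) → ℝ) :
    partialDeriv' i (tensorBernstein m c) =
      fun x => m i * tensorBernstein (update m i (m i - 1)) (Δ_[Pi.single i 1] c) x := by
  ext x
  rw [partialDeriv', funext (tensorBernstein_update m c x i)]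
  rw [← update_eq_self i x, tensorBernstein_update, update_eq_self, update_idem, update_self]
  rcases hm : m i with _ | M
  · simp [bernsteinPolynomial]
  · rw [(bernsteinPolynomial.hasDerivAt_sum_mul_eval M _ (x i)).deriv]
    simp only [tensorBernstein, fwdDiff, update_add_single, ← sum_sub_distrib, sub_mul,
      Nat.add_sub_cancel]
    push_cast
    ring

theorem partialDeriv'_const_mul (i : Fin d) (K : ℝ) (F : (Fin d → ℝ) → ℝ) :
    partialDeriv' i (fun x => K * F x) = fun x => K * partialDeriv' i F x := by
  ext x
  exact deriv_const_mul_field K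

theorem prod_descFactorial_count_cons (i : Fin d) (l : List (Fin d)) (m : Fin d → ℕ) :
    ∏ i', ((m i').descFactorial ((i :: l).count i') : ℝ) =
      (∏ i', ((m i').descFactorial (l.count i') : ℝ)) * (m i - l.count i : ℕ) := by
  have h : ∀ i', ((m i').descFactorial ((i :: l).count i') : ℝ) =
      (m i').descFactorial (l.count i') * if i' = i then ((m i - l.count i : ℕ) : ℝ) else 1 := by
    intro i'
    rcases eq_or_ne i' i with rfl | h
    · rw [List.count_cons_self, Nat.descFactorial_succ, if_pos rfl]; push_cast; ring
    · rw [List.count_cons_of_ne (Ne.symm h), if_neg h, mul_one]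
  rw [prod_congr rfl fun i' _ => h i', prod_mul_distrib, prod_ite_eq' univ i]
  simp

theorem foldr_partialDeriv'_tensorBernstein (l : List (Fin d)) (m : Fin d → ℕ)
    (c : (Fin d → ℕ) → ℝ) :
    l.foldr partialDeriv' (tensorBernstein m c) = fun x =>
      (∏ i, ((m i).descFactorial (l.count i) : ℝ)) *
        tensorBernstein (fun i => m i - l.count i)
          (fwdDiffAlong (fun i => Pi.single i 1) l c) x := by
  induction l with
  | nil => simp [fwdDiffAlong]
  | cons i l ih =>
    have hm : update (fun i' => m i' - l.count i') i (m i - l.count i - 1) =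
        fun i' => m i' - (i :: l).count i' := by
      ext1 i'
      rcases eq_or_ne i' i with rfl | h
      · simp [Nat.sub_sub]
      · simp [h, List.count_cons_of_ne (Ne.symm h)]
    rw [List.foldr_cons, ih, partialDeriv'_const_mul, partialDeriv'_tensorBernstein, hm,
      prod_descFactorial_count_cons]
    ext x
    simp only [fwdDiffAlong, List.foldr_cons]
    ring

theorem tensorBernstein_add_mul (m : Fin d → ℕ) (c : (Fin d → ℕ) → ℝ) (x : Fin d → ℝ) (a b : ℝ) :
    tensorBernstein m (fun j => a + b * c j) x = a + b * tensorBernstein m c x := by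
  have hw : ∑ j ∈ Fintype.piFinset (fun i => range (m i + 1)),
      ∏ i, (bernsteinPolynomial ℝ (m i) (j i)).eval (x i) = 1 := by
    rw [← prod_univ_sum (fun i => range (m i + 1))
      (fun i a => (bernsteinPolynomial ℝ (m i) a).eval (x i))]
    simp [bernsteinPolynomial.sum_eval]
  simp only [tensorBernstein, add_mul, sum_add_distrib, ← mul_sum, hw, mul_assoc]
  ring

theorem tensorBernstein_sum {ι : Type*} (s : Finset ι) (m : Fin d → ℕ)
    (c : ι → (Fin d → ℕ) → ℝ) (x : Fin d → ℝ) :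
    tensorBernstein m (fun j => ∑ l ∈ s, c l j) x = ∑ l ∈ s, tensorBernstein m (c l) x := by
  simp only [tensorBernstein, sum_mul]
  exact sum_comm

theorem tensorBernstein_apply_coord (m : Fin d → ℕ) (G : ℕ → ℝ) (x : Fin d → ℝ) (i : Fin d) :
    tensorBernstein m (fun j => G (j i)) x =
      ∑ a ∈ range (m i + 1), G a * (bernsteinPolynomial ℝ (m i) a).eval (x i) := by
  have h := prod_univ_sum (fun l => range (m l + 1))
    (fun l a => (if l = i then G a else 1) * (bernsteinPolynomial ℝ (m l) a).eval (x l))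
  rw [prod_eq_single i (fun l _ hl => by simp [hl, bernsteinPolynomial.sum_eval]) (by simp)] at h
  simp only [↓reduceIte] at h
  rw [h, tensorBernstein]
  refine sum_congr rfl fun j _ => ?_
  rw [prod_mul_distrib, prod_ite_eq' univ i]
  simp

variable {m : Fin d → ℕ} {x : Fin d → ℝ}

theorem prod_eval_bernsteinPolynomial_nonneg (hx : x ∈ Set.Icc 0 1) (j : Fin d → ℕ) :
    0 ≤ ∏ i, (bernsteinPolynomial ℝ (m i) (j i)).eval (x i) :=
  prod_nonneg fun i _ => bernsteinPolynomial.eval_nonneg _ _ (hx.1 i) (hx.2 i)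

theorem tensorBernstein_mono (hx : x ∈ Set.Icc 0 1) {c c' : (Fin d → ℕ) → ℝ}
    (h : ∀ j ∈ Fintype.piFinset (fun i => range (m i + 1)), c j ≤ c' j) :
    tensorBernstein m c x ≤ tensorBernstein m c' x :=
  sum_le_sum fun j hj => mul_le_mul_of_nonneg_right (h j hj)
    (prod_eval_bernsteinPolynomial_nonneg hx j)

theorem abs_tensorBernstein_le (hx : x ∈ Set.Icc 0 1) (c : (Fin d → ℕ) → ℝ) :
    |tensorBernstein m c x| ≤ tensorBernstein m (fun j => |c j|) x := by
  refine (abs_sum_le_sum_abs _ _).trans_eq (sum_congr rfl fun j _ => ?_)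
  rw [abs_mul, abs_of_nonneg (prod_eval_bernsteinPolynomial_nonneg hx j)]

theorem tensorBernstein_sum_sq_sub_le (hm : ∀ i, 0 < m i) (hx : x ∈ Set.Icc 0 1)
    {ξ : (Fin d → ℕ) → Fin d → ℝ} {η : Fin d → ℝ}
    (hξ : ∀ j ∈ Fintype.piFinset (fun i => range (m i + 1)), ∀ i, |ξ j i - j i / m i| ≤ η i) :
    tensorBernstein m (fun j => ∑ i, (ξ j i - x i) ^ 2) x ≤
      ∑ i, (2 * η i ^ 2 + (2 * (m i : ℝ))⁻¹) := by
  rw [tensorBernstein_sum]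
  refine sum_le_sum fun i _ => ?_
  calc tensorBernstein m (fun j => (ξ j i - x i) ^ 2) x
      ≤ tensorBernstein m (fun j => 2 * η i ^ 2 + 2 * ((j i : ℝ) / m i - x i) ^ 2) x := by
        refine tensorBernstein_mono hx fun j hj => ?_
        have := abs_le.1 (hξ j hj i)
        nlinarith [sq_nonneg (ξ j i - j i / m i - (j i / m i - x i))]
    _ = 2 * η i ^ 2 + 2 * (x i * (1 - x i) / m i) := by
        rw [tensorBernstein_add_mul m (fun j => ((j i : ℝ) / m i - x i) ^ 2),
          tensorBernstein_apply_coord m (fun a => ((a : ℝ) / m i - x i) ^ 2),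
          bernsteinPolynomial.sum_sq_sub_mul_eval (hm i)]
    _ ≤ 2 * η i ^ 2 + (2 * (m i : ℝ))⁻¹ := by
        have hx4 : x i * (1 - x i) ≤ 1 / 4 := by nlinarith [sq_nonneg (x i - 1 / 2)]
        rw [show (2 * (m i : ℝ))⁻¹ = 2 * (1 / 4 / m i) by field_simp; norm_num]
        gcongr

end TensorBernstein

section PartialDeriv

variable {d : ℕ}

def HasPartialDeriv (i : Fin d) (u u' : (Fin d → ℝ) → ℝ) : Prop :=
  ∀ x, HasDerivAt (fun t => u (update x i t)) (u' x) (x i)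

namespace HasPartialDeriv

variable {i : Fin d} {u u' : (Fin d → ℝ) → ℝ}

theorem hasDerivAt_update (h : HasPartialDeriv i u u') (x : Fin d → ℝ) (τ : ℝ) :
    HasDerivAt (fun t => u (update x i t)) (u' (update x i τ)) τ := by
  simpa using h (update x i τ)

theorem fwdDiff (h : HasPartialDeriv i u u') (v : Fin d → ℝ) :
    HasPartialDeriv i (Δ_[v] u) (Δ_[v] u') := by
  intro x
  have hshift : ∀ t, update x i t + v = update (x + v) i (t + v i) := fun t => by
    rw [update_add, update_eq_self]
  simp only [_root_.fwdDiff, hshift]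
  have := (h.hasDerivAt_update (x + v) (x i + v i)).comp_add_const (x i) (v i)
  rw [← hshift, update_eq_self] at this
  exact this.sub (h x)

theorem exists_fwdDiff_single_eq (h : HasPartialDeriv i u u') {s : ℝ} (hs : 0 < s)
    (y : Fin d → ℝ) :
    ∃ τ ∈ Set.Icc (y i) (y i + s), Δ_[Pi.single i s] u y = s * u' (update y i τ) := by
  obtain ⟨τ, hτ, hslope⟩ := exists_hasDerivAt_eq_slope (fun t => u (update y i t))
    (fun τ => u' (update y i τ)) (lt_add_of_pos_right (y i) hs)
    (fun t _ => (h.hasDerivAt_update y t).continuousAt.continuousWithinAt)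
    (fun t _ => h.hasDerivAt_update y t)
  refine ⟨τ, Set.Ioo_subset_Icc_self hτ, ?_⟩
  rw [hslope, add_sub_cancel_left, mul_div_cancel₀ _ hs.ne', update_eq_self, _root_.fwdDiff,
    ← update_add_single, update_eq_self]

end HasPartialDeriv

theorem IsPartialAlong.fwdDiff {l : List (Fin d)} {f g : (Fin d → ℝ) → ℝ}
    (hfg : IsPartialAlong l f g) (v : Fin d → ℝ) : IsPartialAlong l (Δ_[v] f) (Δ_[v] g) := by
  induction l generalizing g with
  | nil => exact congrArg _ hfg
  | cons i l ih =>
    obtain ⟨h, hl, hi⟩ := hfg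
    exact ⟨Δ_[v] h, ih hl, HasPartialDeriv.fwdDiff hi v⟩

theorem IsPartialAlong.exists_fwdDiffAlong_eq {l : List (Fin d)} {f g : (Fin d → ℝ) → ℝ}
    (hfg : IsPartialAlong l f g) {s : ℝ} (hs : 0 < s) (y : Fin d → ℝ) :
    ∃ ξ : Fin d → ℝ, (∀ i, ξ i ∈ Set.Icc (y i) (y i + l.count i * s)) ∧
      fwdDiffAlong (fun i => Pi.single i s) l f y = s ^ l.length * g ξ := by
  induction l generalizing f g with
  | nil => exact ⟨y, by simp, by simp [fwdDiffAlong, show g = f from hfg]⟩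
  | cons i l ih =>
    obtain ⟨h, hl, hi⟩ := hfg
    obtain ⟨ξ, hξ, heq⟩ := ih (hl.fwdDiff (Pi.single i s))
    obtain ⟨τ, hτ, hτeq⟩ := HasPartialDeriv.exists_fwdDiff_single_eq hi hs ξ
    refine ⟨update ξ i τ, fun i' => ?_, ?_⟩
    · rcases eq_or_ne i' i with rfl | h
      · simp only [update_self, List.count_cons_self, Nat.cast_succ]
        constructor <;> linarith [(hξ i').1, (hξ i').2, hτ.1, hτ.2]
      · simpa [h, List.count_cons_of_ne (Ne.symm h)] using hξ i'
    · rw [fwdDiffAlong, List.foldr_cons, ← fwdDiffAlong, ← fwdDiffAlong_fwdDiff, heq, hτeq,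
        List.length_cons, pow_succ, mul_assoc]

end PartialDeriv

section CubeBernstein

variable {d : ℕ}

theorem cubeBernstein_eq_tensorBernstein (n : ℕ) (f : (Fin d → ℝ) → ℝ) :
    cubeBernstein d n f = tensorBernstein (fun _ => n) fun j => f fun i => (j i : ℝ) / n := by
  ext x
  simp [cubeBernstein, tensorBernstein, bernsteinPolynomial, mul_assoc]

theorem fwdDiffAlong_grid (n : ℕ) (l : List (Fin d)) (f : (Fin d → ℝ) → ℝ) (j : Fin d → ℕ) :
    fwdDiffAlong (fun i => Pi.single i 1) l (fun j : Fin d → ℕ => f fun i => (j i : ℝ) / n) j =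
      fwdDiffAlong (fun i => Pi.single i (1 / n : ℝ)) l f fun i => (j i : ℝ) / n := by
  let grid : (Fin d → ℕ) →+ (Fin d → ℝ) :=
    { toFun := fun j i => (j i : ℝ) / n
      map_zero' := by ext; simp
      map_add' := fun _ _ => by ext; simp [add_div] }
  have hsingle : grid ∘ (fun i => Pi.single i 1) = fun i => Pi.single i (1 / n : ℝ) := by
    ext i l
    rcases eq_or_ne l i with rfl | h <;> simp [grid, *]
  exact congrFun (hsingle ▸ fwdDiffAlong_comp grid _ l f) j

theorem mixedPartial_cubeBernstein_eq {k : Fin d → ℕ} {f g : (Fin d → ℝ) → ℝ}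
    (hfg : IsPartialAlong (multiIndexList k) f g) {n : ℕ} (hn : 0 < n) :
    ∃ ξ : (Fin d → ℕ) → Fin d → ℝ,
      (∀ j i, ξ j i ∈ Set.Icc ((j i : ℝ) / n) ((j i : ℝ) / n + k i / n)) ∧
      mixedPartial k (cubeBernstein d n f) = fun x =>
        (∏ i, (n.descFactorial (k i) : ℝ) / n ^ k i) *
          tensorBernstein (fun i => n - k i) (fun j => g (ξ j)) x := by
  have hs : (0 : ℝ) < 1 / n := by positivity
  choose ξ hξ heq using fun j : Fin d → ℕ => hfg.exists_fwdDiffAlong_eq hs fun i => (j i : ℝ) / n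
  refine ⟨ξ, fun j i => ?_, ?_⟩
  · simpa [count_multiIndexList, div_eq_mul_inv] using hξ j i
  ext x
  simp only [mixedPartial_eq_foldr, cubeBernstein_eq_tensorBernstein,
    foldr_partialDeriv'_tensorBernstein, count_multiIndexList, tensorBernstein, fwdDiffAlong_grid,
    heq, length_multiIndexList, prod_div_distrib, prod_pow_eq_pow_sum, mul_sum]
  have hn' : (n : ℝ) ≠ 0 := by positivity
  refine sum_congr rfl fun j _ => ?_
  rw [one_div_pow]
  field_simp

end CubeBernstein

section Approximation

variable {d : ℕ}

theorem abs_sub_le_add_mul_sum_sq {S : Set (Fin d → ℝ)} {g : (Fin d → ℝ) → ℝ} {M δ ε : ℝ}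
    (hM : ∀ y ∈ S, |g y| ≤ M) (hδ : 0 < δ) {x : Fin d → ℝ} (hx : x ∈ S)
    (hg : ∀ y ∈ S, dist y x < δ → |g y - g x| ≤ ε) {y : Fin d → ℝ} (hy : y ∈ S) :
    |g y - g x| ≤ ε + 2 * M / δ ^ 2 * ∑ i, (y i - x i) ^ 2 := by
  have hM0 : 0 ≤ M := (abs_nonneg _).trans (hM x hx)
  have hε : 0 ≤ ε := (abs_nonneg _).trans (hg x hx (by simpa using hδ))
  by_cases hyx : dist y x < δ
  · have : 0 ≤ 2 * M / δ ^ 2 * ∑ i, (y i - x i) ^ 2 := by positivity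
    linarith [hg y hy hyx]
  obtain ⟨i, hi⟩ : ∃ i, δ ≤ |y i - x i| := by
    by_contra! h
    exact hyx ((dist_pi_lt_iff hδ).2 fun i => by simpa [Real.dist_eq] using h i)
  have hsq : δ ^ 2 ≤ ∑ i, (y i - x i) ^ 2 := by
    refine le_trans ?_ (single_le_sum (fun i _ => sq_nonneg (y i - x i)) (mem_univ i))
    rw [← sq_abs (y i - x i)]
    gcongr
  calc |g y - g x| ≤ |g y| + |g x| := abs_sub _ _
    _ ≤ 2 * M / δ ^ 2 * δ ^ 2 := by
        rw [div_mul_cancel₀ _ (by positivity)]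
        linarith [hM y hy, hM x hx]
    _ ≤ 2 * M / δ ^ 2 * ∑ i, (y i - x i) ^ 2 := by gcongr
    _ ≤ ε + 2 * M / δ ^ 2 * ∑ i, (y i - x i) ^ 2 := le_add_of_nonneg_left hε

theorem abs_tensorBernstein_comp_sub_le {m : Fin d → ℕ} (hm : ∀ i, 0 < m i)
    {g : (Fin d → ℝ) → ℝ} {M δ ε : ℝ} (hM : ∀ y ∈ Set.Icc 0 1, |g y| ≤ M) (hδ : 0 < δ)
    {x : Fin d → ℝ} (hx : x ∈ Set.Icc 0 1)
    (hg : ∀ y ∈ Set.Icc 0 1, dist y x < δ → |g y - g x| ≤ ε)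
    {ξ : (Fin d → ℕ) → Fin d → ℝ} {η : Fin d → ℝ}
    (hξ : ∀ j ∈ Fintype.piFinset (fun i => range (m i + 1)), ξ j ∈ Set.Icc 0 1)
    (hη : ∀ j ∈ Fintype.piFinset (fun i => range (m i + 1)), ∀ i, |ξ j i - j i / m i| ≤ η i) :
    |tensorBernstein m (fun j => g (ξ j)) x - g x| ≤
      ε + 2 * M / δ ^ 2 * ∑ i, (2 * η i ^ 2 + (2 * (m i : ℝ))⁻¹) := by
  have hM0 : 0 ≤ M := (abs_nonneg _).trans (hM x hx)
  calc |tensorBernstein m (fun j => g (ξ j)) x - g x|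
      = |tensorBernstein m (fun j => g (ξ j) - g x) x| := by
        simpa [sub_eq_neg_add] using congrArg (|·|) (tensorBernstein_add_mul m _ x (-g x) 1).symm
    _ ≤ tensorBernstein m (fun j => |g (ξ j) - g x|) x := abs_tensorBernstein_le hx _
    _ ≤ tensorBernstein m (fun j => ε + 2 * M / δ ^ 2 * ∑ i, (ξ j i - x i) ^ 2) x :=
        tensorBernstein_mono hx fun j hj => abs_sub_le_add_mul_sum_sq hM hδ hx hg (hξ j hj)
    _ = ε + 2 * M / δ ^ 2 * tensorBernstein m (fun j => ∑ i, (ξ j i - x i) ^ 2) x :=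
        tensorBernstein_add_mul _ _ _ _ _
    _ ≤ ε + 2 * M / δ ^ 2 * ∑ i, (2 * η i ^ 2 + (2 * (m i : ℝ))⁻¹) := by
        gcongr
        exact tensorBernstein_sum_sq_sub_le hm hx hη

theorem abs_mul_sub_le (a t y : ℝ) : |a * t - y| ≤ |t - y| + |a - 1| * (|y| + |t - y|) := by
  calc |a * t - y| = |(t - y) + (a - 1) * t| := by ring_nf
    _ ≤ |t - y| + |a - 1| * |t| := by rw [← abs_mul]; exact abs_add_le _ _
    _ ≤ |t - y| + |a - 1| * (|y| + |t - y|) := by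
        gcongr
        calc |t| = |y + (t - y)| := by ring_nf
          _ ≤ |y| + |t - y| := abs_add_le _ _

theorem grid_node_mem_Icc_and_abs_sub_le {k : Fin d → ℕ} {n : ℕ} (hkn : ∀ i, k i < n)
    {ξ : (Fin d → ℕ) → Fin d → ℝ}
    (hξ : ∀ j i, ξ j i ∈ Set.Icc ((j i : ℝ) / n) ((j i : ℝ) / n + k i / n))
    {j : Fin d → ℕ} (hj : j ∈ Fintype.piFinset fun i => range (n - k i + 1)) :
    ξ j ∈ Set.Icc 0 1 ∧ ∀ i, |ξ j i - j i / ((n - k i : ℕ) : ℝ)| ≤ k i / n := by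
  have hcoord (i : Fin d) :
      0 ≤ ξ j i ∧ ξ j i ≤ 1 ∧ |ξ j i - j i / ((n - k i : ℕ) : ℝ)| ≤ k i / n := by
    have hji : j i + k i ≤ n := by
      have := Fintype.mem_piFinset.1 hj i
      have := hkn i
      simp only [mem_range] at *
      omega
    have hjk : (j i : ℝ) + k i ≤ n := by exact_mod_cast hji
    have hkn' : (k i : ℝ) < n := by exact_mod_cast hkn i
    have hn : (0 : ℝ) < n := by linarith [(k i).cast_nonneg (α := ℝ)]
    have hnk : (0 : ℝ) < n - k i := by linarith
    rw [Nat.cast_sub (hkn i).le]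
    have hlow : (j i : ℝ) / n ≤ j i / (n - k i) := by gcongr; linarith [(k i).cast_nonneg (α := ℝ)]
    have hup : (j i : ℝ) / (n - k i) ≤ j i / n + k i / n := by
      rw [← add_div, div_le_div_iff₀ hnk hn]
      nlinarith [(k i).cast_nonneg (α := ℝ)]
    have h1 : (j i : ℝ) / n + k i / n ≤ 1 := by rw [← add_div]; exact (div_le_one hn).2 hjk
    have hz := hξ j i
    exact ⟨le_trans (by positivity) hz.1, hz.2.trans h1,
      abs_sub_le_iff.2 ⟨by linarith [hz.2], by linarith [hz.1]⟩⟩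
  exact ⟨⟨fun i => (hcoord i).1, fun i => (hcoord i).2.1⟩, fun i => (hcoord i).2.2⟩

theorem tendsto_prod_descFactorial_div_pow (k : Fin d → ℕ) :
    Tendsto (fun n : ℕ => ∏ i, (n.descFactorial (k i) : ℝ) / n ^ k i) atTop (𝓝 1) := by
  have hfactor (l : ℕ) : Tendsto (fun n : ℕ => ((n - l : ℕ) : ℝ) / n) atTop (𝓝 1) := by
    have : Tendsto (fun n : ℕ => 1 - (l : ℝ) / n) atTop (𝓝 1) := by
      simpa using tendsto_const_nhds.sub (tendsto_const_div_atTop_nhds_zero_nat (l : ℝ))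
    refine this.congr' ?_
    filter_upwards [eventually_gt_atTop l] with n hn
    have : (n : ℝ) ≠ 0 := Nat.cast_ne_zero.2 (by omega)
    rw [Nat.cast_sub hn.le]
    field_simp
  have hdesc (r : ℕ) : Tendsto (fun n : ℕ => (n.descFactorial r : ℝ) / n ^ r) atTop (𝓝 1) := by
    have := tendsto_finsetProd (range r) fun l _ => hfactor l
    rw [prod_const_one] at this
    refine this.congr fun n => ?_
    rw [Nat.descFactorial_eq_prod_range, Nat.cast_prod, prod_div_distrib, prod_const, card_range]
  simpa using tendsto_finsetProd univ fun i _ => hdesc (k i)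

theorem tendsto_sum_sq_div_add_inv (k : Fin d → ℕ) :
    Tendsto (fun n : ℕ => ∑ i, (2 * ((k i : ℝ) / n) ^ 2 + (2 * ((n - k i : ℕ) : ℝ))⁻¹)) atTop
      (𝓝 0) := by
  simpa using tendsto_finsetSum univ fun i _ =>
    (((tendsto_const_div_atTop_nhds_zero_nat (k i : ℝ)).pow 2).const_mul 2).add
      (tendsto_inv_atTop_zero.comp ((tendsto_natCast_atTop_atTop.comp
        (tendsto_sub_atTop_nat (k i))).const_mul_atTop two_pos))

end Approximation

theorem abs_mixedPartial_cubeBernstein_sub_le {d : ℕ} {k : Fin d → ℕ} {f g : (Fin d → ℝ) → ℝ}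
    (hfg : IsPartialAlong (multiIndexList k) f g) {M δ ε : ℝ}
    (hM : ∀ y ∈ Set.Icc 0 1, |g y| ≤ M) (hδ : 0 < δ) {x : Fin d → ℝ} (hx : x ∈ Set.Icc 0 1)
    (hg : ∀ y ∈ Set.Icc 0 1, dist y x < δ → |g y - g x| ≤ ε) {n : ℕ} (hn : 0 < n)
    (hkn : ∀ i, k i < n) {E : ℝ}
    (hE : ε + 2 * M / δ ^ 2 * ∑ i, (2 * ((k i : ℝ) / n) ^ 2 + (2 * ((n - k i : ℕ) : ℝ))⁻¹) ≤ E) :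
    |mixedPartial k (cubeBernstein d n f) x - g x| ≤
      E + |∏ i, (n.descFactorial (k i) : ℝ) / n ^ k i - 1| * (M + E) := by
  obtain ⟨ξ, hξ, hrepr⟩ := mixedPartial_cubeBernstein_eq hfg hn
  have hT := abs_tensorBernstein_comp_sub_le (m := fun i => n - k i)
    (fun i => Nat.sub_pos_of_lt (hkn i)) hM hδ hx hg
    (fun j hj => (grid_node_mem_Icc_and_abs_sub_le hkn hξ hj).1)
    (fun j hj => (grid_node_mem_Icc_and_abs_sub_le hkn hξ hj).2)
  rw [hrepr]
  refine (abs_mul_sub_le _ _ _).trans (add_le_add (hT.trans hE) ?_)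
  exact mul_le_mul_of_nonneg_left (add_le_add (hM x hx) (hT.trans hE)) (abs_nonneg _)

theorem cubeBernstein_mixedPartial_tendstoUniformlyOn_general (d : ℕ)
    (k : Fin d → ℕ) (f g : (Fin d → ℝ) → ℝ)
    (hg : IsPartialAlong (multiIndexList k) f g) (hgc : Continuous g) :
    TendstoUniformlyOn (fun n x => mixedPartial k (cubeBernstein d n f) x) g
      Filter.atTop (Set.Icc (0 : Fin d → ℝ) 1) := by
  have hcube : IsCompact (Set.Icc (0 : Fin d → ℝ) 1) := isCompact_Icc
  obtain ⟨M, hM⟩ := hcube.exists_bound_of_continuousOn hgc.continuousOn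
  simp only [Real.norm_eq_abs] at hM
  rw [Metric.tendstoUniformlyOn_iff]
  intro ε hε
  obtain ⟨δ, hδ, hgδ⟩ := Metric.uniformContinuousOn_iff.1
    (hcube.uniformContinuousOn_of_continuous hgc.continuousOn) (ε / 4) (by positivity)
  have hα := ((tendsto_prod_descFactorial_div_pow k).sub_const 1).abs.mul_const (M + ε / 2)
  have hR := (tendsto_sum_sq_div_add_inv k).const_mul (2 * M / δ ^ 2)
  simp only [sub_self, abs_zero, zero_mul, mul_zero] at hα hR
  filter_upwards [eventually_gt_atTop 0, eventually_all.2 fun i => eventually_gt_atTop (k i),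
    hα.eventually (gt_mem_nhds (half_pos hε)),
    hR.eventually (gt_mem_nhds (by positivity : 0 < ε / 4))] with n hn hkn hαn hRn x hx
  have := abs_mixedPartial_cubeBernstein_sub_le hg hM hδ hx
    (fun y hy hyx => (hgδ y hy x hx hyx).le) hn hkn (E := ε / 2) (by linarith)
  rw [dist_comm, Real.dist_eq]
  linarith

/-- If `d ≥ 1`, `k` is a multi-index and `f : ℝ^d → ℝ` possesses a continuous mixed
partial derivative `g = ∂^{|k|}f/∂x_1^{k_1}⋯∂x_d^{k_d}`, then the corresponding mixed
partial derivatives of the cube Bernstein polynomials `B̃_n(f;·)` converge to `g`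
uniformly on the cube `K^d = [0,1]^d`. -/
theorem cubeBernstein_mixedPartial_tendstoUniformlyOn (d : ℕ) (hd : 1 ≤ d)
    (k : Fin d → ℕ) (f g : (Fin d → ℝ) → ℝ)
    (hg : IsPartialAlong (multiIndexList k) f g) (hgc : Continuous g) :
    TendstoUniformlyOn (fun n x => mixedPartial k (cubeBernstein d n f) x) g
      Filter.atTop (Set.Icc (0 : Fin d → ℝ) 1) :=
  cubeBernstein_mixedPartial_tendstoUniformlyOn_general d k f g hg hgc
end

section
/- Let d ≥ 1, n ≥ 1, let k = (k_1,…,k_d) be a multi-index with |k| ≤ n, and let f : ℝ^d → ℝ. Then the mixed partial derivative of the simplex Bernstein polynomial satisfies ∂^{|k|}B_n(f;x)/∂x_1^{k_1}⋯∂x_d^{k_d} = (n!/(n−|k|)!) · ∑_{j_1+⋯+j_d ≤ n−|k|, j_i ≥ 0} Δ_{(x_1)}^{k_1}⋯Δ_{(x_d)}^{k_d} f(j_1/n,…,j_d/n) · ((n−|k|)!/(j_1!⋯j_d!(n−|k|−|j|)!)) · x_1^{j_1}⋯x_d^{j_d} (1−‖x‖)^{n−|k|−|j|}. -/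
/-- The `n`-th "simplex" Bernstein polynomial of `f : ℝ^d → ℝ`. -/
noncomputable def simplexBernstein (d n : ℕ) (f : (Fin d → ℝ) → ℝ) (x : Fin d → ℝ) : ℝ :=
  ∑ j ∈ (Fintype.piFinset (fun _ : Fin d => Finset.range (n + 1))).filter
      (fun j => ∑ i, j i ≤ n),
    f (fun i => (j i : ℝ) / n) *
      ((n.factorial : ℝ) / (((∏ i, (j i).factorial) * (n - ∑ i, j i).factorial : ℕ) : ℝ)) *
      (∏ i, x i ^ (j i)) * (1 - ∑ i, x i) ^ (n - ∑ i, j i)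

/-- Forward difference of `g : ℝ^d → ℝ` in the `i`-th coordinate with step `z`. -/
def coordFwdDiff {d : ℕ} (i : Fin d) (z : ℝ) (g : (Fin d → ℝ) → ℝ) :
    (Fin d → ℝ) → ℝ :=
  fun x => g (Function.update x i (x i + z)) - g x

/-- The iterated finite difference `Δ^k = Δ_{(x_1)}^{k_1} ∘ ⋯ ∘ Δ_{(x_d)}^{k_d}` with
step `1/n` in each coordinate. -/
noncomputable def multiFwdDiffN {d : ℕ} (n : ℕ) (k : Fin d → ℕ) (g : (Fin d → ℝ) → ℝ) :
    (Fin d → ℝ) → ℝ :=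
  (List.finRange d).foldr (fun i h => (coordFwdDiff i (1 / (n : ℝ)))^[k i] h) g

/-!
Write `B_m g := ∑_{|j| ≤ m} g j · C_m(j) · x^j (1 - ‖x‖)^{m-|j|}`, `C_m(j) = m!/(j! (m-|j|)!)`,
for a function `g` on the lattice `ℕ^d`. Differentiating `x^j (1 - ‖x‖)^a` in `x_i` gives
`j_i x^{j - e_i} (1 - ‖x‖)^a - a x^j (1 - ‖x‖)^{a-1}`, and the identities
`(j_i + 1) C_{m+1}(j + e_i) = (m+1) C_m(j)` and `(m+1-|j|) C_{m+1}(j) = (m+1) C_m(j)` turn the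
two resulting sums, after the shift `j ↦ j + e_i` in the first, into
`∂_i B_{m+1} g = (m+1) B_m (Δ_i g)` with `Δ_i` the forward difference on the lattice. Iterating
produces the factor `n (n-1) ⋯ (n-|k|+1) = n!/(n-|k|)!`, and the lattice differences of
`j ↦ f (j/n)` are the differences of `f` with step `1/n` evaluated at the nodes `j/n`.
-/

open Finset Function

lemma Function.Semiconj.list_foldr {ι α β : Type*} {φ : α → β} {A : ι → α → α} {B : ι → β → β}
    (h : ∀ i, Semiconj φ (A i) (B i)) (l : List ι) :
    Semiconj φ (fun a => l.foldr A a) (fun b => l.foldr B b) := by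
  induction l with
  | nil => exact fun _ => rfl
  | cons i l ih => exact fun a => by simp only [List.foldr_cons, h i _, ih a]

section

variable {d : ℕ}

def simplexIndices (d m : ℕ) : Finset (Fin d → ℕ) :=
  (Fintype.piFinset fun _ : Fin d => range (m + 1)).filter fun j => ∑ i, j i ≤ m

lemma mem_simplexIndices {m : ℕ} {j : Fin d → ℕ} : j ∈ simplexIndices d m ↔ ∑ i, j i ≤ m := by
  rw [simplexIndices, mem_filter, Fintype.mem_piFinset, and_iff_right_iff_imp]
  exact fun h i => mem_range_succ_iff.2
    ((single_le_sum (fun _ _ => Nat.zero_le _) (mem_univ i)).trans h)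

lemma filter_piFinset_range_eq_simplexIndices {m N : ℕ} (h : m ≤ N) :
    (Fintype.piFinset fun _ : Fin d => range (N + 1)).filter (fun j => ∑ i, j i ≤ m) =
      simplexIndices d m := by
  ext j
  rw [mem_simplexIndices, mem_filter, and_iff_right_iff_imp, Fintype.mem_piFinset]
  exact fun hj i => mem_range_succ_iff.2
    ((single_le_sum (fun _ _ => Nat.zero_le _) (mem_univ i)).trans (hj.trans h))

lemma sum_add_single_one (j : Fin d → ℕ) (i : Fin d) :
    ∑ i', (j + Pi.single i 1 : Fin d → ℕ) i' = ∑ i', j i' + 1 := by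
  simp [sum_add_distrib]

lemma sub_single_one_add_single_one {j : Fin d → ℕ} {i : Fin d} (hi : j i ≠ 0) :
    j - Pi.single i 1 + Pi.single i 1 = j := by
  ext i'
  rcases eq_or_ne i' i with rfl | hne
  · simp only [Pi.add_apply, Pi.sub_apply, Pi.single_eq_same]; omega
  · simp [hne]

lemma sum_simplexIndices_succ_eq_sum_add_single {M : Type*} [AddCommMonoid M] {m : ℕ} (i : Fin d)
    {φ : (Fin d → ℕ) → M} (h : ∀ j, j i = 0 → φ j = 0) :
    ∑ j ∈ simplexIndices d (m + 1), φ j = ∑ j ∈ simplexIndices d m, φ (j + Pi.single i 1) := by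
  rw [← sum_filter_of_ne (p := fun j => j i ≠ 0) fun j _ hφ hj => hφ (h j hj)]
  refine sum_nbij' (· - Pi.single i 1) (· + Pi.single i 1) ?_ ?_ ?_ ?_ fun j hj => ?_
  · intro j hj
    rw [mem_filter, mem_simplexIndices] at hj
    rw [mem_simplexIndices]
    have := sum_add_single_one (j - Pi.single i 1) i
    rw [sub_single_one_add_single_one hj.2] at this
    omega
  · intro j hj
    rw [mem_simplexIndices] at hj
    rw [mem_filter, mem_simplexIndices, sum_add_single_one]
    simpa using hj
  · intro j hj
    exact sub_single_one_add_single_one (mem_filter.1 hj).2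
  · intro j _
    exact add_tsub_cancel_right j _
  · rw [sub_single_one_add_single_one (mem_filter.1 hj).2]

lemma sum_simplexIndices_succ_eq_of_eq_zero {M : Type*} [AddCommMonoid M] {m : ℕ}
    {φ : (Fin d → ℕ) → M} (h : ∀ j, ∑ i, j i = m + 1 → φ j = 0) :
    ∑ j ∈ simplexIndices d (m + 1), φ j = ∑ j ∈ simplexIndices d m, φ j := by
  refine (sum_subset (fun j hj => ?_) fun j hj hj' => h j ?_).symm
  · rw [mem_simplexIndices] at hj ⊢; omega
  · rw [mem_simplexIndices] at hj hj'; omega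

noncomputable def simplexCoeff (m : ℕ) (j : Fin d → ℕ) : ℝ :=
  (m.factorial : ℝ) / (((∏ i, (j i).factorial) * (m - ∑ i, j i).factorial : ℕ) : ℝ)

lemma prod_factorial_add_single_one (j : Fin d → ℕ) (i : Fin d) :
    ∏ i', ((j + Pi.single i 1 : Fin d → ℕ) i').factorial = (j i + 1) * ∏ i', (j i').factorial := by
  rw [Fintype.prod_eq_mul_prod_compl i,
    Fintype.prod_eq_mul_prod_compl i (fun i' => (j i').factorial), Pi.add_apply,
    Pi.single_eq_same, Nat.factorial_succ, mul_assoc]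
  congr 2
  exact prod_congr rfl fun i' hi' => by
    rw [Pi.add_apply, Pi.single_eq_of_ne (mem_compl.1 hi' ∘ mem_singleton.2), add_zero]

lemma sub_mul_simplexCoeff_succ {m : ℕ} {j : Fin d → ℕ} (hj : ∑ i, j i ≤ m) :
    ((m + 1 - ∑ i, j i : ℕ) : ℝ) * simplexCoeff (m + 1) j = (m + 1) * simplexCoeff m j := by
  rw [simplexCoeff, simplexCoeff, Nat.sub_add_comm hj, Nat.factorial_succ, Nat.factorial_succ]
  have : ((m - ∑ i, j i : ℕ) : ℝ) + 1 ≠ 0 := by positivity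
  push_cast
  field_simp

lemma succ_mul_simplexCoeff_succ_add_single (m : ℕ) (j : Fin d → ℕ) (i : Fin d) :
    ((j i : ℝ) + 1) * simplexCoeff (m + 1) (j + Pi.single i 1) = (m + 1) * simplexCoeff m j := by
  rw [simplexCoeff, simplexCoeff, sum_add_single_one, prod_factorial_add_single_one,
    Nat.add_sub_add_right, Nat.factorial_succ]
  have : (j i : ℝ) + 1 ≠ 0 := by positivity
  push_cast
  field_simp

noncomputable def simplexMonomial (j : Fin d → ℕ) (a : ℕ) (x : Fin d → ℝ) : ℝ :=
  (∏ i, x i ^ j i) * (1 - ∑ i, x i) ^ a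

lemma hasDerivAt_simplexMonomial_update (j : Fin d → ℕ) (a : ℕ) (x : Fin d → ℝ) (i : Fin d) :
    HasDerivAt (fun t => simplexMonomial j a (update x i t))
      (j i * simplexMonomial (j - Pi.single i 1) a x - a * simplexMonomial j (a - 1) x) (x i) := by
  set P := ∏ i' ∈ {i}ᶜ, x i' ^ j i'
  set c := 1 - ∑ i' ∈ {i}ᶜ, x i'
  have hrest : ∀ (e : Fin d → ℕ), (∀ i' ≠ i, e i' = j i') →
      ∏ i', x i' ^ e i' = x i ^ e i * P := fun e he => by
    rw [Fintype.prod_eq_mul_prod_compl i]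
    exact congrArg _ (prod_congr rfl fun i' hi' => by
      rw [he i' (mem_compl.1 hi' ∘ mem_singleton.2)])
  have hsum : 1 - ∑ i', x i' = c - x i := by
    rw [Fintype.sum_eq_add_sum_compl i]; ring
  have hfun : (fun t => simplexMonomial j a (update x i t)) =
      fun t => P * (t ^ j i * (c - t) ^ a) := by
    funext t
    rw [simplexMonomial, Fintype.prod_eq_mul_prod_compl i, Fintype.sum_eq_add_sum_compl i,
      update_self]
    have hne : ∀ i' ∈ ({i}ᶜ : Finset (Fin d)), i' ≠ i := fun i' hi' =>
      mem_compl.1 hi' ∘ mem_singleton.2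
    rw [prod_congr rfl fun i' hi' => by rw [update_of_ne (hne i' hi')],
      sum_congr rfl fun i' hi' => by rw [update_of_ne (hne i' hi')]]
    ring
  have hderiv := ((hasDerivAt_pow (j i) (x i)).mul
    (((hasDerivAt_id (x i)).const_sub c).pow a)).const_mul P
  rw [hfun]
  refine hderiv.congr_deriv ?_
  rw [simplexMonomial, simplexMonomial, hsum, hrest j fun _ _ => rfl,
    hrest (j - Pi.single i 1) fun i' hi' => by simp [hi'], Pi.sub_apply, Pi.single_eq_same]
  simp only [id, Pi.pow_apply]
  ring

noncomputable def latticeBernstein (m : ℕ) (g : (Fin d → ℕ) → ℝ) (x : Fin d → ℝ) : ℝ :=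
  ∑ j ∈ simplexIndices d m, g j * simplexCoeff m j * simplexMonomial j (m - ∑ i, j i) x

def latticeFwdDiff (i : Fin d) (g : (Fin d → ℕ) → ℝ) : (Fin d → ℕ) → ℝ :=
  fun j => g (j + Pi.single i 1) - g j

lemma hasDerivAt_latticeBernstein_succ (m : ℕ) (g : (Fin d → ℕ) → ℝ) (x : Fin d → ℝ)
    (i : Fin d) :
    HasDerivAt (fun t => latticeBernstein (m + 1) g (update x i t))
      ((m + 1) * latticeBernstein m (latticeFwdDiff i g) x) (x i) := by
  refine (HasDerivAt.fun_sum fun j _ => (hasDerivAt_simplexMonomial_update j _ x i).const_mul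
    (g j * simplexCoeff (m + 1) j)).congr_deriv ?_
  simp only [latticeBernstein, latticeFwdDiff, mul_sub, sub_mul, sum_sub_distrib, mul_sum]
  congr 1
  · rw [sum_simplexIndices_succ_eq_sum_add_single i fun j hj => by simp [hj]]
    refine sum_congr rfl fun j _ => ?_
    rw [sum_add_single_one, add_tsub_cancel_right, Pi.add_apply, Pi.single_eq_same,
      Nat.add_sub_add_right]
    push_cast
    linear_combination (g (j + Pi.single i 1) * simplexMonomial j (m - ∑ i, j i) x) *
      succ_mul_simplexCoeff_succ_add_single m j i
  · rw [sum_simplexIndices_succ_eq_of_eq_zero fun j hj => by simp [hj]]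
    refine sum_congr rfl fun j hj => ?_
    rw [mem_simplexIndices] at hj
    rw [show m + 1 - ∑ i, j i - 1 = m - ∑ i, j i by omega]
    linear_combination (g j * simplexMonomial j (m - ∑ i, j i) x) * sub_mul_simplexCoeff_succ hj

lemma partialDeriv'_smul (i : Fin d) (c : ℝ) (F : (Fin d → ℝ) → ℝ) :
    partialDeriv' i (c • F) = c • partialDeriv' i F :=
  funext fun x => congrFun (deriv_const_mul_field' (v := fun t => F (update x i t)) c) (x i)

lemma iterate_partialDeriv'_smul (i : Fin d) (r : ℕ) (c : ℝ) (F : (Fin d → ℝ) → ℝ) :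
    (partialDeriv' i)^[r] (c • F) = c • (partialDeriv' i)^[r] F :=
  Commute.iterate_left (fun F => partialDeriv'_smul i c F) r F

lemma partialDeriv'_latticeBernstein_succ (i : Fin d) (m : ℕ) (g : (Fin d → ℕ) → ℝ) :
    partialDeriv' i (latticeBernstein (m + 1) g) =
      ((m : ℝ) + 1) • latticeBernstein m (latticeFwdDiff i g) :=
  funext fun x => (hasDerivAt_latticeBernstein_succ m g x i).deriv

lemma iterate_partialDeriv'_latticeBernstein (i : Fin d) {r m : ℕ} (h : r ≤ m)
    (g : (Fin d → ℕ) → ℝ) :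
    (partialDeriv' i)^[r] (latticeBernstein m g) =
      (m.descFactorial r : ℝ) • latticeBernstein (m - r) ((latticeFwdDiff i)^[r] g) := by
  induction r generalizing m g with
  | zero => simp
  | succ r ih =>
    obtain ⟨m, rfl⟩ : ∃ m', m = m' + 1 := ⟨m - 1, by omega⟩
    rw [iterate_succ_apply, partialDeriv'_latticeBernstein_succ,
      iterate_partialDeriv'_smul, ih (by omega), smul_smul,
      Nat.succ_descFactorial_succ, Nat.add_sub_add_right, ← iterate_succ_apply, Nat.cast_mul,
      Nat.cast_succ]

lemma foldr_partialDeriv'_latticeBernstein (k : Fin d → ℕ) (l : List (Fin d)) {m : ℕ}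
    (h : (l.map k).sum ≤ m) (g : (Fin d → ℕ) → ℝ) :
    l.foldr (fun i F => (partialDeriv' i)^[k i] F) (latticeBernstein m g) =
      (m.descFactorial (l.map k).sum : ℝ) •
        latticeBernstein (m - (l.map k).sum)
          (l.foldr (fun i G => (latticeFwdDiff i)^[k i] G) g) := by
  induction l with
  | nil => simp
  | cons i l ih =>
    rw [List.map_cons, List.sum_cons] at h ⊢
    rw [List.foldr_cons, ih (by omega), iterate_partialDeriv'_smul,
      iterate_partialDeriv'_latticeBernstein i (by omega), smul_smul, Nat.sub_sub, add_comm,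
      ← Nat.descFactorial_mul_descFactorial (Nat.le_add_left _ (k i)), Nat.add_sub_cancel,
      List.foldr_cons, Nat.cast_mul, mul_comm]

lemma semiconj_coordFwdDiff_latticeFwdDiff (n : ℕ) (i : Fin d) :
    Semiconj (fun (F : (Fin d → ℝ) → ℝ) (j : Fin d → ℕ) => F fun i' => (j i' : ℝ) / n)
      (coordFwdDiff i (1 / n)) (latticeFwdDiff i) := by
  intro F
  funext j
  simp only [coordFwdDiff, latticeFwdDiff]
  congr 2
  funext i'
  rcases eq_or_ne i' i with rfl | hne
  · simp [add_div]
  · simp [hne]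

end

theorem simplexBernstein_mixedPartial_eq_general (d n : ℕ)
    (k : Fin d → ℕ) (hk : ∑ i, k i ≤ n) (f : (Fin d → ℝ) → ℝ) (x : Fin d → ℝ) :
    mixedPartial k (simplexBernstein d n f) x =
      (n.factorial : ℝ) / ((n - ∑ i, k i).factorial : ℝ) *
        ∑ j ∈ (Fintype.piFinset (fun _ : Fin d => Finset.range (n + 1))).filter
            (fun j => ∑ i, j i ≤ n - ∑ i, k i),
          multiFwdDiffN n k f (fun i => (j i : ℝ) / n) *
            (((n - ∑ i, k i).factorial : ℝ) /
              (((∏ i, (j i).factorial) * (n - ∑ i, k i - ∑ i, j i).factorial : ℕ) : ℝ)) *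
            (∏ i, x i ^ (j i)) * (1 - ∑ i, x i) ^ (n - ∑ i, k i - ∑ i, j i) := by
  have hsum : ((List.finRange d).map k).sum = ∑ i, k i := (Fin.sum_univ_def k).symm
  have hB : simplexBernstein d n f = latticeBernstein n fun j => f fun i => (j i : ℝ) / n := by
    ext y
    simp only [simplexBernstein, latticeBernstein, simplexIndices, simplexCoeff, simplexMonomial,
      mul_assoc]
  have hΔ : (List.finRange d).foldr (fun i G => (latticeFwdDiff i)^[k i] G)
      (fun j => f fun i => (j i : ℝ) / n) = fun j => multiFwdDiffN n k f fun i => (j i : ℝ) / n :=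
    ((Semiconj.list_foldr (fun i => (semiconj_coordFwdDiff_latticeFwdDiff n i).iterate_right (k i))
      (List.finRange d)) f).symm
  rw [mixedPartial, hB, foldr_partialDeriv'_latticeBernstein k _ (hsum ▸ hk), hsum, hΔ,
    filter_piFinset_range_eq_simplexIndices (Nat.sub_le n _), ← Nat.factorial_mul_descFactorial hk,
    Nat.cast_mul, mul_div_cancel_left₀ _ (by positivity)]
  simp only [Pi.smul_apply, smul_eq_mul, latticeBernstein, simplexCoeff, simplexMonomial, mul_assoc]

/-- For `d ≥ 1`, `n ≥ 1`, a multi-index `k` with `|k| ≤ n`, and any `f : ℝ^d → ℝ`,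
`∂^{|k|}B_n(f;x)/∂x^k = (n!/(n-|k|)!) ∑_{|j| ≤ n-|k|} Δ^k f(j/n) ·
  ((n-|k|)!/(j_1!⋯j_d!(n-|k|-|j|)!)) x_1^{j_1}⋯x_d^{j_d} (1-‖x‖)^{n-|k|-|j|}`. -/
theorem simplexBernstein_mixedPartial_eq (d n : ℕ) (hd : 1 ≤ d) (hn : 1 ≤ n)
    (k : Fin d → ℕ) (hk : ∑ i, k i ≤ n) (f : (Fin d → ℝ) → ℝ) (x : Fin d → ℝ) :
    mixedPartial k (simplexBernstein d n f) x =
      (n.factorial : ℝ) / ((n - ∑ i, k i).factorial : ℝ) *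
        ∑ j ∈ (Fintype.piFinset (fun _ : Fin d => Finset.range (n + 1))).filter
            (fun j => ∑ i, j i ≤ n - ∑ i, k i),
          multiFwdDiffN n k f (fun i => (j i : ℝ) / n) *
            (((n - ∑ i, k i).factorial : ℝ) /
              (((∏ i, (j i).factorial) * (n - ∑ i, k i - ∑ i, j i).factorial : ℕ) : ℝ)) *
            (∏ i, x i ^ (j i)) * (1 - ∑ i, x i) ^ (n - ∑ i, k i - ∑ i, j i) :=
  simplexBernstein_mixedPartial_eq_general d n k hk f x
end
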